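/- Let α > 0 and θ ∈ ℝ^m. Let f : ℝ^m → ℝ satisfy f(w) ≤ (α/2)‖w‖² for all w ∈ ℝ^m. Suppose z, q ∈ ℝ^m are such that q is a subgradient of f at z (f(w) ≥ f(z) + ⟪q, w − z⟫ for all w) and f(z) ≥ −⟪z, θ⟫ − ‖θ‖²/(2α). Then (1/(4α))·‖q‖² ≤ α‖z‖² + ⟪z, θ⟫ + ‖θ‖²/(2α). -/

import Mathlib

open scoped RealInnerProductSpace

/-!
Testing the subgradient inequality at `w = α⁻¹ q` against the quadratic upper bound on `f`
gives `‖q‖²/(2α) ≤ ⟪q, z⟫ - f z`. The lower bound on `f z` controls `-f z`, and Young's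
inequality `⟪q, z⟫ ≤ ‖q‖²/(4α) + α‖z‖²` absorbs half of the left-hand side.
-/

section

variable {E : Type*} [NormedAddCommGroup E] [InnerProductSpace ℝ E]

theorem real_inner_le_sq_norm_div_add_mul_sq_norm {α : ℝ} (hα : 0 < α) (x y : E) :
    ⟪x, y⟫ ≤ ‖x‖ ^ 2 / (4 * α) + α * ‖y‖ ^ 2 := by
  have hsq : 0 ≤ ‖x - (2 * α) • y‖ ^ 2 := sq_nonneg _
  rw [norm_sub_sq_real, real_inner_smul_right, norm_smul, Real.norm_of_nonneg (by positivity)]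
    at hsq
  rw [div_add' _ _ _ (by positivity), le_div_iff₀ (by positivity)]
  nlinarith

theorem sq_norm_div_le_inner_sub_of_subgradient {f : E → ℝ} {α : ℝ} (hα : 0 < α)
    (hupper : ∀ w, f w ≤ α / 2 * ‖w‖ ^ 2) {z q : E}
    (hsub : ∀ w, f z + ⟪q, w - z⟫ ≤ f w) :
    ‖q‖ ^ 2 / (2 * α) ≤ ⟪q, z⟫ - f z := by
  have hq := (hsub (α⁻¹ • q)).trans (hupper (α⁻¹ • q))
  rw [inner_sub_right, real_inner_smul_right, real_inner_self_eq_norm_sq, norm_smul,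
    Real.norm_of_nonneg (inv_nonneg.mpr hα.le)] at hq
  have hnorm : α / 2 * (α⁻¹ * ‖q‖) ^ 2 = α⁻¹ * ‖q‖ ^ 2 - ‖q‖ ^ 2 / (2 * α) := by
    field_simp
    ring
  linarith

end

/-- Pointwise bound on the optimal dual density: if `f(w) ≤ (α/2)‖w‖²` for all `w`,
`q` is a subgradient of `f` at `z`, and `f(z) ≥ −⟪z,θ⟫ − ‖θ‖²/(2α)`, then
`(1/(4α))‖q‖² ≤ α‖z‖² + ⟪z,θ⟫ + ‖θ‖²/(2α)`. -/
theorem stmt_8 {m : ℕ} (α : ℝ) (hα : 0 < α) (θ : EuclideanSpace ℝ (Fin m))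
    (f : EuclideanSpace ℝ (Fin m) → ℝ)
    (hupper : ∀ w : EuclideanSpace ℝ (Fin m), f w ≤ α / 2 * ‖w‖ ^ 2)
    (z q : EuclideanSpace ℝ (Fin m))
    (hsub : ∀ w : EuclideanSpace ℝ (Fin m), f z + ⟪q, w - z⟫ ≤ f w)
    (hlower : -⟪z, θ⟫ - ‖θ‖ ^ 2 / (2 * α) ≤ f z) :
    1 / (4 * α) * ‖q‖ ^ 2 ≤ α * ‖z‖ ^ 2 + ⟪z, θ⟫ + ‖θ‖ ^ 2 / (2 * α) := by
  have hgap := sq_norm_div_le_inner_sub_of_subgradient hα hupper hsub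
  have hyoung := real_inner_le_sq_norm_div_add_mul_sq_norm hα q z
  have hhalf : ‖q‖ ^ 2 / (2 * α) = ‖q‖ ^ 2 / (4 * α) + 1 / (4 * α) * ‖q‖ ^ 2 := by
    field_simp
    ring
  linarith
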